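/- (Weiss) The infinite fan F = {(r cos θ, r sin θ) : r ∈ [0,1], θ ∈ {2π, 2π/2, 2π/3, ...}} ⊂ ℝ², with the Euclidean metric, is a universal minimality detector: for every compact metric space (X,d) and every non-minimal sequence x̄ = (x_1,x_2,...) ∈ X^ℕ, there exists a continuous function f : X → F such that the sequence (f(x_1),f(x_2),...) ∈ F^ℕ is not minimal. -/

import Mathlib

/-!
If `x` is not minimal, some `w` in its orbit closure has an orbit closure `M` not containing
`x`. Since `M` is closed in the product topology, every point of `M` differs from `x` in one of
the first `N` coordinates. Take a continuous `f` into the fan whose fibres through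
`x 0, …, x (N - 1)` are singletons. If `f ∘ x` were minimal it would lie in the orbit closure of
`f ∘ w`, which by compactness is the image of `M`; so `x` would agree with a point of `M` on the
first `N` coordinates. Such an `f` sends a small tent around each `x i` onto its own spoke of the
fan, reaching radius `1` exactly at `x i`.
-/

open Set unitInterval

/-- The left shift `S` on sequences: `S(x₁,x₂,x₃,…) = (x₂,x₃,…)`. -/
def shiftSeq {X : Type*} (z : ℕ → X) : ℕ → X := fun n => z (n + 1)

/-- The closure of the forward shift-orbit `{z, Sz, S²z, …}` of a sequence `z`,
inside the sequence space `ℕ → X`.  (For a compact metric space `X` the product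
topology on `ℕ → X` is exactly the topology of the metric
`d̄(x̄,ȳ) = ∑ᵢ d(xᵢ,yᵢ)/2ⁱ`.) -/
def shiftOrbitClosure {X : Type*} [TopologicalSpace X] (z : ℕ → X) : Set (ℕ → X) :=
  closure (Set.range fun k => shiftSeq^[k] z)

/-- A sequence `z` is *minimal* if the closure of its shift-orbit is a minimal
dynamical system under the shift, i.e. every point of this closure has dense
forward orbit in it. -/
def IsMinimalSeq {X : Type*} [TopologicalSpace X] (z : ℕ → X) : Prop :=
  ∀ w ∈ shiftOrbitClosure z, shiftOrbitClosure z ⊆ shiftOrbitClosure w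

noncomputable section

/-- The infinite fan `{(r cos θ, r sin θ) : r ∈ [0,1], θ ∈ {2π, 2π/2, 2π/3, …}}`
as a subspace of the Euclidean plane. -/
def infiniteFan : Set (EuclideanSpace ℝ (Fin 2)) :=
  {p | ∃ r ∈ Set.Icc (0 : ℝ) 1, ∃ n : ℕ, 0 < n ∧
    p = ![r * Real.cos (2 * Real.pi / n), r * Real.sin (2 * Real.pi / n)]}


open Real Function

section Shift

variable {X Y : Type*}

lemma iterate_shiftSeq_apply (z : ℕ → X) (k n : ℕ) : shiftSeq^[k] z n = z (n + k) := by
  induction k generalizing z with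
  | zero => rfl
  | succ k ih => rw [iterate_succ_apply, ih]; rfl

lemma iterate_shiftSeq_comp (f : X → Y) (z : ℕ → X) (k : ℕ) :
    shiftSeq^[k] (f ∘ z) = f ∘ shiftSeq^[k] z := by
  funext n
  simp only [iterate_shiftSeq_apply, Function.comp_apply]

variable [TopologicalSpace X] [TopologicalSpace Y]

lemma continuous_shiftSeq : Continuous (shiftSeq : (ℕ → X) → ℕ → X) :=
  continuous_pi fun n => continuous_apply (n + 1)

lemma iterate_shiftSeq_mem_shiftOrbitClosure (z : ℕ → X) (k : ℕ) :
    shiftSeq^[k] z ∈ shiftOrbitClosure z :=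
  subset_closure ⟨k, rfl⟩

lemma mapsTo_shiftOrbitClosure {φ : (ℕ → X) → ℕ → Y} (hφ : Continuous φ) {w : ℕ → X}
    {v : ℕ → Y} (h : ∀ k, φ (shiftSeq^[k] w) ∈ shiftOrbitClosure v) :
    MapsTo φ (shiftOrbitClosure w) (shiftOrbitClosure v) :=
  MapsTo.closure_left (fun _ ⟨k, hk⟩ => hk ▸ h k) hφ isClosed_closure

lemma shiftSeq_mem_shiftOrbitClosure {z w : ℕ → X} (h : z ∈ shiftOrbitClosure w) :
    shiftSeq z ∈ shiftOrbitClosure w :=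
  mapsTo_shiftOrbitClosure continuous_shiftSeq (fun k => by
    rw [← iterate_succ_apply' shiftSeq]
    exact iterate_shiftSeq_mem_shiftOrbitClosure w (k + 1)) h

lemma shiftOrbitClosure_subset_of_mem {z w : ℕ → X} (h : z ∈ shiftOrbitClosure w) :
    shiftOrbitClosure z ⊆ shiftOrbitClosure w := by
  refine closure_minimal (range_subset_iff.2 fun k => ?_) isClosed_closure
  induction k with
  | zero => exact h
  | succ k ih =>
    rw [iterate_succ_apply']
    exact shiftSeq_mem_shiftOrbitClosure ih

lemma isMinimalSeq_iff {z : ℕ → X} :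
    IsMinimalSeq z ↔ ∀ w ∈ shiftOrbitClosure z, z ∈ shiftOrbitClosure w :=
  ⟨fun h w hw => h w hw (iterate_shiftSeq_mem_shiftOrbitClosure z 0),
    fun h w hw => shiftOrbitClosure_subset_of_mem (h w hw)⟩

lemma comp_mem_shiftOrbitClosure_comp {f : X → Y} (hf : Continuous f) {z w : ℕ → X}
    (h : z ∈ shiftOrbitClosure w) : f ∘ z ∈ shiftOrbitClosure (f ∘ w) :=
  mapsTo_shiftOrbitClosure (Pi.continuous_postcomp hf) (fun k => by
    rw [← iterate_shiftSeq_comp]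
    exact iterate_shiftSeq_mem_shiftOrbitClosure _ k) h

lemma shiftOrbitClosure_comp_subset_image [CompactSpace X] [T2Space Y] {f : X → Y}
    (hf : Continuous f) (w : ℕ → X) :
    shiftOrbitClosure (f ∘ w) ⊆ (f ∘ ·) '' shiftOrbitClosure w :=
  closure_minimal
    (range_subset_iff.2 fun k =>
      ⟨_, iterate_shiftSeq_mem_shiftOrbitClosure w k, (iterate_shiftSeq_comp f w k).symm⟩)
    (isClosed_closure.isCompact.image (Pi.continuous_postcomp hf)).isClosed

lemma exists_lt_ne_of_notMem_of_isClosed {M : Set (ℕ → X)} (hM : IsClosed M) {x : ℕ → X}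
    (hx : x ∉ M) : ∃ N, ∀ m ∈ M, ∃ i < N, m i ≠ x i := by
  by_contra! h
  choose m hmM hmx using h
  have hm : Filter.Tendsto m Filter.atTop (nhds x) := by
    refine tendsto_pi_nhds.2 fun i => tendsto_const_nhds.congr' ?_
    filter_upwards [Filter.eventually_gt_atTop i] with N hN
    exact (hmx N i hN).symm
  exact hx (hM.mem_of_tendsto hm (Filter.Eventually.of_forall hmM))

theorem exists_finset_forall_not_isMinimalSeq_comp [CompactSpace X] [T2Space Y]
    {x : ℕ → X} (hx : ¬ IsMinimalSeq x) :
    ∃ S : Finset X, ∀ f : X → Y, Continuous f → (∀ s ∈ S, f ⁻¹' {f s} = {s}) →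
      ¬ IsMinimalSeq (f ∘ x) := by
  classical
  obtain ⟨w, hw, hxw⟩ : ∃ w ∈ shiftOrbitClosure x, x ∉ shiftOrbitClosure w := by
    simpa [isMinimalSeq_iff] using hx
  obtain ⟨N, hN⟩ := exists_lt_ne_of_notMem_of_isClosed isClosed_closure hxw
  refine ⟨(Finset.range N).image x, fun f hf hfib hmin => ?_⟩
  obtain ⟨m, hm, hfm⟩ := shiftOrbitClosure_comp_subset_image hf w
    (isMinimalSeq_iff.1 hmin _ (comp_mem_shiftOrbitClosure_comp hf hw))
  obtain ⟨i, hi, hne⟩ := hN m hm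
  have hfib_i := hfib (x i) (Finset.mem_image_of_mem x (Finset.mem_range.2 hi))
  exact hne (hfib_i.subset (congrFun hfm i))

end Shift

-- The spokes at angles `2π/(n+2) ∈ (0, π]`, on which `cos` is injective.
def fanRay (n : ℕ) : EuclideanSpace ℝ (Fin 2) :=
  WithLp.toLp 2 ![cos (2 * π / (n + 2)), sin (2 * π / (n + 2))]

lemma smul_fanRay_mem_infiniteFan {r : ℝ} (hr : r ∈ Icc 0 1) (n : ℕ) :
    r • fanRay n ∈ infiniteFan :=
  ⟨r, hr, n + 2, n.succ_pos.trans (Nat.lt_succ_self _), by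
    ext i; fin_cases i <;> simp [fanRay]⟩

lemma norm_fanRay (n : ℕ) : ‖fanRay n‖ = 1 := by
  simp [EuclideanSpace.norm_eq, fanRay, Fin.sum_univ_two]

lemma fanRay_injective : Injective fanRay := by
  intro m n h
  have hangle (k : ℕ) : 2 * π / (k + 2) ∈ Icc 0 π := by
    refine ⟨by positivity, div_le_of_le_mul₀ (by positivity) pi_pos.le ?_⟩
    nlinarith [pi_pos, (k.cast_nonneg : (0 : ℝ) ≤ k)]
  have hcos : cos (2 * π / (m + 2)) = cos (2 * π / (n + 2)) := by
    simpa [fanRay] using congrArg (fun p : EuclideanSpace ℝ (Fin 2) => p 0) h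
  have := injOn_cos (hangle m) (hangle n) hcos
  field_simp at this
  exact_mod_cast (by linarith [pi_pos] : (m : ℝ) = n)

lemma eq_one_and_eq_of_smul_fanRay_eq {r : ℝ} (hr : 0 ≤ r) {m n : ℕ}
    (h : r • fanRay m = fanRay n) : r = 1 ∧ m = n := by
  have hr1 : r = 1 := by
    simpa [norm_smul, norm_fanRay, abs_of_nonneg hr] using congrArg norm h
  subst hr1
  exact ⟨rfl, fanRay_injective (by simpa using h)⟩

section FanSum

variable {X ι : Type*}

lemma forall_ne_eq_zero_of_ne_zero {g : ι → X → ℝ}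
    (hdisj : Pairwise (Disjoint on fun i => support (g i))) {z : X} {i : ι}
    (hi : g i z ≠ 0) : ∀ j ≠ i, g j z = 0 :=
  fun _ hj => by_contra fun hj' => Set.disjoint_left.1 (hdisj hj) hj' hi

variable [Fintype ι]

def fanSum (g : ι → X → ℝ) (e : ι → ℕ) (z : X) : EuclideanSpace ℝ (Fin 2) :=
  ∑ i, g i z • fanRay (e i)

variable {g : ι → X → ℝ} (e : ι → ℕ)

lemma fanSum_eq_of_forall_ne {z : X} {i : ι} (h : ∀ j ≠ i, g j z = 0) :
    fanSum g e z = g i z • fanRay (e i) :=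
  Finset.sum_eq_single i (fun j _ hj => by rw [h j hj, zero_smul]) (by simp)

lemma fanSum_mem_infiniteFan (hdisj : Pairwise (Disjoint on fun i => support (g i)))
    (hg : ∀ i z, g i z ∈ Icc 0 1) (z : X) : fanSum g e z ∈ infiniteFan := by
  by_cases h : ∃ i, g i z ≠ 0
  · obtain ⟨i, hi⟩ := h
    rw [fanSum_eq_of_forall_ne e (forall_ne_eq_zero_of_ne_zero hdisj hi)]
    exact smul_fanRay_mem_infiniteFan (hg i z) _
  · push Not at h
    simpa [fanSum, h] using smul_fanRay_mem_infiniteFan ⟨le_rfl, zero_le_one⟩ 0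

lemma eq_one_of_fanSum_eq (hdisj : Pairwise (Disjoint on fun i => support (g i)))
    (he : Injective e) (hg : ∀ i z, 0 ≤ g i z) {i : ι} {s z : X} (hs : g i s = 1)
    (h : fanSum g e z = fanSum g e s) : g i z = 1 := by
  obtain ⟨j, hj⟩ : ∃ j, ∀ k ≠ j, g k z = 0 := by
    by_cases hz : ∃ j, g j z ≠ 0
    · exact hz.imp fun _ => forall_ne_eq_zero_of_ne_zero hdisj
    · push Not at hz
      exact ⟨i, fun k _ => hz k⟩
  have hs' : fanSum g e s = fanRay (e i) := by
    rw [fanSum_eq_of_forall_ne e (forall_ne_eq_zero_of_ne_zero hdisj (hs ▸ one_ne_zero)), hs,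
      one_smul]
  rw [hs', fanSum_eq_of_forall_ne e hj] at h
  obtain ⟨hz1, hji⟩ := eq_one_and_eq_of_smul_fanRay_eq (hg j z) h
  rwa [← he hji]

lemma continuous_fanSum [TopologicalSpace X] (hg : ∀ i, Continuous (g i)) :
    Continuous (fanSum g e) :=
  continuous_finsetSum _ fun i _ => (hg i).smul continuous_const

end FanSum

section Tent

variable {X : Type*} [MetricSpace X]

def tent (s : X) (δ : ℝ) (z : X) : ℝ := max 0 (1 - dist z s / δ)

lemma continuous_tent (s : X) (δ : ℝ) : Continuous (tent s δ) :=
  continuous_const.max (continuous_const.sub ((continuous_id.dist continuous_const).div_const δ))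

lemma tent_mem_Icc (s : X) {δ : ℝ} (hδ : 0 ≤ δ) (z : X) : tent s δ z ∈ Icc 0 1 :=
  ⟨le_max_left _ _, max_le zero_le_one (sub_le_self _ (by positivity))⟩

lemma tent_self (s : X) (δ : ℝ) : tent s δ s = 1 := by
  simp [tent]

lemma dist_lt_of_tent_ne_zero {s z : X} {δ : ℝ} (hδ : 0 < δ) (h : tent s δ z ≠ 0) :
    dist z s < δ := by
  by_contra! hle
  exact h (max_eq_left (by rw [sub_nonpos, one_le_div hδ]; exact hle))

lemma eq_of_tent_eq_one {s z : X} {δ : ℝ} (hδ : 0 < δ) (h : tent s δ z = 1) : z = s := by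
  by_contra hne
  have hpos : 0 < dist z s / δ := div_pos (dist_pos.2 hne) hδ
  exact (max_lt one_pos (by linarith) : tent s δ z < 1).ne h

end Tent

theorem exists_continuous_infiniteFan_preimage_singleton {X : Type*} [MetricSpace X]
    (S : Finset X) : ∃ f : X → infiniteFan, Continuous f ∧ ∀ s ∈ S, f ⁻¹' {f s} = {s} := by
  obtain ⟨δ, hδ, hsep⟩ : ∃ δ > 0, ∀ a ∈ S, ∀ b ∈ S, a ≠ b → 2 * δ ≤ dist a b := by
    by_cases hS : (S : Set X).Nontrivial
    · refine ⟨(S : Set X).infsep / 2, half_pos (S.infsep_pos_iff_nontrivial.2 hS),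
        fun a ha b hb hab => ?_⟩
      linarith [Set.infsep_le_dist_of_mem (s := (S : Set X)) ha hb hab]
    · exact ⟨1, one_pos, fun a ha b hb hab => (hab (not_nontrivial_iff.1 hS ha hb)).elim⟩
  let g : S → X → ℝ := fun s => tent s δ
  have hdisj : Pairwise (Disjoint on fun s => support (g s)) := by
    refine fun a b hab => Set.disjoint_left.2 fun z ha hb => ?_
    linarith [hsep a a.2 b b.2 (Subtype.coe_injective.ne hab), dist_triangle_left (a : X) b z,
      dist_lt_of_tent_ne_zero hδ ha, dist_lt_of_tent_ne_zero hδ hb]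
  let e : S → ℕ := fun s => S.equivFin s
  have he : Injective e := Fin.val_injective.comp S.equivFin.injective
  have hg : ∀ s z, g s z ∈ Icc 0 1 := fun s => tent_mem_Icc (s : X) hδ.le
  refine ⟨fun z => ⟨fanSum g e z, fanSum_mem_infiniteFan e hdisj hg z⟩,
    (continuous_fanSum e fun s => continuous_tent (s : X) δ).subtype_mk _, fun s hs => ?_⟩
  ext z
  refine ⟨fun h => eq_of_tent_eq_one hδ ?_, fun h => h ▸ rfl⟩
  exact eq_one_of_fanSum_eq e hdisj he (fun s z => (hg s z).1) (i := ⟨s, hs⟩) (tent_self s δ)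
    (congrArg Subtype.val h)

/-- (Weiss) The infinite fan is a universal minimality detector: for every
compact metric space `X` and every non-minimal sequence `x̄ ∈ Xᴺ` there is a
continuous `f : X → F` such that `(f x₁, f x₂, …)` is not minimal. -/
theorem infiniteFan_is_universal_minimality_detector
    {X : Type*} [MetricSpace X] [CompactSpace X]
    (x : ℕ → X) (hx : ¬ IsMinimalSeq x) :
    ∃ f : X → infiniteFan, Continuous f ∧ ¬ IsMinimalSeq (fun n => f (x n)) := by
  obtain ⟨S, hS⟩ := exists_finset_forall_not_isMinimalSeq_comp (Y := infiniteFan) hx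
  obtain ⟨f, hf, hfib⟩ := exists_continuous_infiniteFan_preimage_singleton S
  exact ⟨f, hf, hS f hf hfib⟩

end
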